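/- Let H be a graph, Y a minimal blocking set of H, and x an optimal half-integral solution to the Independent Set LP on H - Y such that every maximum independent set I of H - Y satisfies V_1^x ⊆ I ⊆ (V(H-Y)) \ V_0^x. Then N_H(Y) ∩ V_1^x = ∅, i.e., the neighborhood of Y in H lies in V_0^x ∪ V_{1/2}^x. -/
import Mathlib


attribute [local instance] Classical.propDecidable

namespace VCKernel

variable {V : Type*} [Fintype V] [DecidableEq V]

/-- `S` is an independent set of `G`. -/
def IsIndep (G : SimpleGraph V) (S : Finset V) : Prop :=
  ∀ u ∈ S, ∀ v ∈ S, ¬ G.Adj u v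

/-- Independence number of the subgraph of `G` induced on the vertex set `A`. -/
noncomputable def alphaOn (G : SimpleGraph V) (A : Set V) : ℕ :=
  sSup {n | ∃ S : Finset V, ↑S ⊆ A ∧ IsIndep G S ∧ S.card = n}

/-- Independence number `α(G)`. -/
noncomputable def alpha (G : SimpleGraph V) : ℕ := alphaOn G Set.univ

/-- `Y` is a blocking set: deleting it decreases the independence number. -/
def IsBlocking (G : SimpleGraph V) (Y : Finset V) : Prop :=
  alphaOn G (Set.univ \ ↑Y) < alpha G

/-- `Y` is a minimal blocking set. -/
def IsMinBlocking (G : SimpleGraph V) (Y : Finset V) : Prop :=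
  IsBlocking G Y ∧ ∀ Y' ⊂ Y, ¬ IsBlocking G Y'

/-- Open neighborhood of the vertex set `X'` in `G`. -/
def nbhd (G : SimpleGraph V) (X' : Finset V) : Set V :=
  {v | ∃ u ∈ X', G.Adj u v}

/-- Number of conflicts induced by `X'` on the induced subgraph with vertex set `A`. -/
noncomputable def conf (G : SimpleGraph V) (A : Set V) (X' : Finset V) : ℕ :=
  alphaOn G A - alphaOn G (A \ nbhd G X')

/-- `C` is (the vertex set of) a connected component of the subgraph of `G`
induced on `A`. -/
def IsCompOf (G : SimpleGraph V) (A C : Set V) : Prop :=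
  C ⊆ A ∧ (G.induce C).Connected ∧ ∀ u ∈ C, ∀ v ∈ A, G.Adj u v → v ∈ C

/-- Feasible solution to the Independent Set LP of the subgraph induced on `A`. -/
def FeasISOn (G : SimpleGraph V) (A : Set V) (x : V → ℝ) : Prop :=
  (∀ v ∈ A, 0 ≤ x v ∧ x v ≤ 1) ∧
    ∀ u ∈ A, ∀ v ∈ A, G.Adj u v → x u + x v ≤ 1

/-- Half-integrality on `A`. -/
def HalfIntOn (A : Set V) (x : V → ℝ) : Prop :=
  ∀ v ∈ A, x v = 0 ∨ x v = 1/2 ∨ x v = 1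

/-- Objective value of an LP solution on vertex set `A`. -/
noncomputable def weightOn (A : Set V) (x : V → ℝ) : ℝ :=
  ∑ v, if v ∈ A then x v else 0

/-- `x` is an optimum half-integral solution to the Independent Set LP
of the subgraph induced on `A`. -/
def OptHIOn (G : SimpleGraph V) (A : Set V) (x : V → ℝ) : Prop :=
  FeasISOn G A x ∧ HalfIntOn A x ∧
    ∀ y : V → ℝ, FeasISOn G A y → HalfIntOn A y → weightOn A y ≤ weightOn A x

/-- Feasible solution to the Vertex Cover LP of `G`. -/
def FeasVC (G : SimpleGraph V) (x : V → ℝ) : Prop :=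
  (∀ v, 0 ≤ x v ∧ x v ≤ 1) ∧ ∀ u v, G.Adj u v → 1 ≤ x u + x v

/-- Optimum value of the Independent Set LP of `G`. -/
noncomputable def lpIS (G : SimpleGraph V) : ℝ :=
  sSup {w | ∃ x : V → ℝ, FeasISOn G Set.univ x ∧ w = ∑ v, x v}

/-- Optimum value of the Vertex Cover LP of `G`. -/
noncomputable def lpVC (G : SimpleGraph V) : ℝ :=
  sInf {w | ∃ x : V → ℝ, FeasVC G x ∧ w = ∑ v, x v}

/-- `C` is a vertex cover of `G`. -/
def IsVC (G : SimpleGraph V) (C : Finset V) : Prop :=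
  ∀ u v, G.Adj u v → u ∈ C ∨ v ∈ C

/-- Vertex cover number of `G`. -/
noncomputable def vcNum (G : SimpleGraph V) : ℕ :=
  sInf {n | ∃ C : Finset V, IsVC G C ∧ C.card = n}

/-- `Z` is a feedback vertex set of `G`. -/
def IsFVS (G : SimpleGraph V) (Z : Finset V) : Prop :=
  (G.induce ((↑Z : Set V)ᶜ)).IsAcyclic

/-- `Z` is an odd cycle transversal of `G`. -/
def IsOCT (G : SimpleGraph V) (Z : Finset V) : Prop :=
  (G.induce ((↑Z : Set V)ᶜ)).Colorable 2

/-- `G` is a `d`-quasi-forest: each connected component has a feedback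
vertex set of size at most `d`. -/
def QuasiForest (G : SimpleGraph V) (d : ℕ) : Prop :=
  ∀ C : Set V, IsCompOf G Set.univ C →
    ∃ Z : Finset V, Z.card ≤ d ∧ (G.induce (C \ ↑Z)).IsAcyclic

/-- `G` is `d`-quasi-bipartite: each connected component has an odd cycle
transversal of size at most `d`. -/
def QuasiBipartite (G : SimpleGraph V) (d : ℕ) : Prop :=
  ∀ C : Set V, IsCompOf G Set.univ C →
    ∃ Z : Finset V, Z.card ≤ d ∧ (G.induce (C \ ↑Z)).Colorable 2

/-- Feedback vertex set number of `G`. -/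
noncomputable def fvsNum (G : SimpleGraph V) : ℕ :=
  sInf {n | ∃ Z : Finset V, IsFVS G Z ∧ Z.card = n}

/-- Odd cycle transversal number of `G`. -/
noncomputable def octNum (G : SimpleGraph V) : ℕ :=
  sInf {n | ∃ Z : Finset V, IsOCT G Z ∧ Z.card = n}

/-- The subgraph of `G` induced on `A` has treedepth at most `k`
(elimination-forest characterization of treedepth). -/
def tdLE (G : SimpleGraph V) : ℕ → Set V → Prop
  | 0, A => A = ∅
  | (k+1), A => ∀ C : Set V, IsCompOf G A C → ∃ v ∈ C, tdLE G k (C \ {v})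

lemma alphaSet_bddAbove (G : SimpleGraph V) (A : Set V) :
    BddAbove {n | ∃ S : Finset V, ↑S ⊆ A ∧ IsIndep G S ∧ S.card = n} := by
  refine ⟨Fintype.card V, ?_⟩
  rintro n ⟨S, -, -, rfl⟩
  exact S.card_le_univ.trans_eq (Finset.card_univ)

lemma le_alphaOn (G : SimpleGraph V) (A : Set V) (S : Finset V)
    (hS : ↑S ⊆ A) (hI : IsIndep G S) : S.card ≤ alphaOn G A :=
  le_csSup (alphaSet_bddAbove G A) ⟨S, hS, hI, rfl⟩

lemma alphaOn_witness (G : SimpleGraph V) (A : Set V) :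
    ∃ S : Finset V, ↑S ⊆ A ∧ IsIndep G S ∧ S.card = alphaOn G A := by
  have hne : {n | ∃ S : Finset V, ↑S ⊆ A ∧ IsIndep G S ∧ S.card = n}.Nonempty :=
    ⟨0, ∅, by simp, by intro u hu; simp at hu, by simp⟩
  have := Nat.sSup_mem hne (alphaSet_bddAbove G A)
  exact this

lemma alphaOn_mono (G : SimpleGraph V) {A B : Set V} (h : A ⊆ B) :
    alphaOn G A ≤ alphaOn G B := by
  obtain ⟨S, hS, hI, hc⟩ := alphaOn_witness G A
  exact hc ▸ le_alphaOn G B S (hS.trans h) hI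

/-- If `Y` is a minimal blocking set and `x` is an optimum half-integral
LP(IS) solution on `G - Y` sandwiching all maximum independent sets of
`G - Y`, then `N_G(Y) ∩ V_1^x = ∅`. -/
theorem stmt4 (G : SimpleGraph V) (Y : Finset V) (hY : IsMinBlocking G Y)
    (x : V → ℝ) (hx : OptHIOn G (Set.univ \ ↑Y) x)
    (hsand : ∀ I : Finset V, (↑I : Set V) ⊆ Set.univ \ ↑Y → IsIndep G I →
      I.card = alphaOn G (Set.univ \ ↑Y) →
        (Set.univ \ ↑Y) ∩ {v | x v = 1} ⊆ (↑I : Set V) ∧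
          (↑I : Set V) ⊆ {v | x v ≠ 0}) :
    nbhd G Y ∩ ((Set.univ \ ↑Y) ∩ {v | x v = 1}) = ∅ := by
  rw [Set.eq_empty_iff_forall_notMem]
  rintro v ⟨⟨u, huY, hadj⟩, ⟨-, hvY⟩, hx1⟩
  -- Y' = Y.erase u is not blocking
  have hsub : Y.erase u ⊂ Y := Finset.erase_ssubset huY
  have hnb := hY.2 _ hsub
  have hge : alpha G ≤ alphaOn G (Set.univ \ ↑(Y.erase u)) := le_of_not_gt hnb
  obtain ⟨I', hI'sub, hI'ind, hI'card⟩ := alphaOn_witness G (Set.univ \ ↑(Y.erase u))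
  have hI'alpha : I'.card = alpha G := by
    refine le_antisymm ?_ (hge.trans hI'card.ge)
    exact le_alphaOn G Set.univ I' (by simp) hI'ind
  have hblock : alphaOn G (Set.univ \ ↑Y) < alpha G := hY.1
  -- u ∈ I'
  have huI' : u ∈ I' := by
    by_contra hu
    have : (↑I' : Set V) ⊆ Set.univ \ ↑Y := by
      intro w hw
      have := hI'sub hw
      simp only [Set.mem_diff, Set.mem_univ, true_and, Finset.coe_erase,
        Set.mem_diff, Set.mem_singleton_iff, not_and, not_not] at this ⊢
      intro hwY
      exact hu (by simpa [this hwY] using hw)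
    have := le_alphaOn G (Set.univ \ ↑Y) I' this hI'ind
    omega
  set I := I'.erase u with hIdef
  have hIsub : (↑I : Set V) ⊆ Set.univ \ ↑Y := by
    intro w hw
    simp only [hIdef, Finset.coe_erase, Set.mem_diff, Set.mem_singleton_iff] at hw
    have h2 := hI'sub hw.1
    simp only [Set.mem_diff, Set.mem_univ, true_and] at h2 ⊢
    intro hwY
    exact h2 (Finset.mem_coe.2 (Finset.mem_erase.2 ⟨hw.2, Finset.mem_coe.1 hwY⟩))
  have hIind : IsIndep G I := fun a ha b hb =>
    hI'ind a (Finset.mem_of_mem_erase ha) b (Finset.mem_of_mem_erase hb)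
  have hIcard : I.card = I'.card - 1 := Finset.card_erase_of_mem huI'
  have hImax : I.card = alphaOn G (Set.univ \ ↑Y) := by
    have h1 : alphaOn G (Set.univ \ ↑Y) ≤ I.card := by omega
    exact le_antisymm (le_alphaOn G _ I hIsub hIind) h1
  obtain ⟨h1, -⟩ := hsand I hIsub hIind hImax
  have hvI : v ∈ I := by
    have : v ∈ (Set.univ \ ↑Y) ∩ {w | x w = 1} := ⟨⟨trivial, hvY⟩, hx1⟩
    exact_mod_cast h1 this
  exact hI'ind u huI' v (Finset.mem_of_mem_erase hvI) hadj

end VCKernel
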